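/- For every n ∈ ℕ, the n-th power of the operator X_s = y∂_q + i x q equals the sum over j = 0,…,⌊n/2⌋ and k = 0,…,n−2j of A(n,j,k) · y^{n−j−k} (ix)^{j+k} q^k ∂_q^{n−2j−k}, where the coefficients A(n,j,k) are defined by the recursion A(n,j,k) = A(n−1,j,k) + A(n−1,j,k−1) + (k+1)·A(n−1,j−1,k+1) with A(0,0,0) = 1 and A(n,j,k) = 0 outside the range 0 ≤ j ≤ ⌊n/2⌋, 0 ≤ k ≤ n−2j. -/

import Mathlib

noncomputable section

def pq (f : ℝ → ℝ → ℝ → ℂ) : ℝ → ℝ → ℝ → ℂ := fun x y q => deriv (fun t => f x y t) q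

def Smooth3 (f : ℝ → ℝ → ℝ → ℂ) : Prop :=
  ContDiff ℝ ⊤ (fun p : ℝ × ℝ × ℝ => f p.1 p.2.1 p.2.2)

/-- X_s = y ∂_q + i x q -/
def Xs (f : ℝ → ℝ → ℝ → ℂ) : ℝ → ℝ → ℝ → ℂ :=
  fun x y q => (y : ℂ) * pq f x y q + Complex.I * x * q * f x y q

/-- The coefficients A(n,j,k), defined by the 4-term recursion
`A(n,j,k) = A(n−1,j,k) + A(n−1,j,k−1) + (k+1)·A(n−1,j−1,k+1)` with `A(0,0,0)=1`
and vanishing outside the range `0 ≤ j ≤ ⌊n/2⌋`, `0 ≤ k ≤ n−2j`. -/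
def Acoef : ℕ → ℤ → ℤ → ℤ
  | 0, j, k => if j = 0 ∧ k = 0 then 1 else 0
  | (n + 1), j, k =>
    if 0 ≤ j ∧ j ≤ ((n : ℤ) + 1) / 2 ∧ 0 ≤ k ∧ k ≤ (n : ℤ) + 1 - 2 * j then
      Acoef n j k + Acoef n j (k - 1) + (k + 1) * Acoef n (j - 1) (k + 1)
    else 0

/-! In any ring with `D * Q - Q * D = 1` and central scalars `a`, `b`, left multiplication by
`X = a D + b Q` sends a normally ordered monomial `Q^k D^m` to
`a Q^k D^(m+1) + b Q^(k+1) D^m + k a Q^(k-1) D^m`; these three terms are exactly the three terms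
of the recursion for `A(n, j, k)`, so `X^n` expands with the coefficients `A(n, j, k)`. The theorem
is this expansion in the ring of linear operators on smooth functions of `q`, with `D = ∂_q` and
`Q` multiplication by `q`, applied to the slice `q ↦ f x y q`. -/

open Finset

theorem Acoef_eq_zero {n : ℕ} {j k : ℤ} (h : ¬(0 ≤ j ∧ 0 ≤ k ∧ 2 * j + k ≤ n)) :
    Acoef n j k = 0 := by
  cases n <;> simp only [Acoef] <;> split_ifs <;> first | rfl | omega

theorem Acoef_succ (n : ℕ) (j k : ℤ) :
    Acoef (n + 1) j k = Acoef n j k + Acoef n j (k - 1) + (k + 1) * Acoef n (j - 1) (k + 1) := by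
  rw [Acoef]
  split_ifs with h
  · rfl
  · by_cases hk : k = -1
    · subst hk
      rw [Acoef_eq_zero (by omega), Acoef_eq_zero (by omega)]
      ring
    · rw [Acoef_eq_zero (by omega), Acoef_eq_zero (by omega), Acoef_eq_zero (by omega)]
      ring

theorem hasFiniteSupport_Acoef (n : ℕ) :
    Function.HasFiniteSupport fun p : ℤ × ℤ => Acoef n p.1 p.2 := by
  refine ((Set.finite_Icc (0 : ℤ) n).prod (Set.finite_Icc (0 : ℤ) n)).subset fun p hp => ?_
  by_contra hmem
  simp only [Set.mem_prod, Set.mem_Icc] at hmem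
  exact hp (Acoef_eq_zero (by omega))

theorem finsum_eq_sum_range_sum_range {M : Type*} [AddCommMonoid M] {n : ℕ} (G : ℤ × ℤ → M)
    (hG : ∀ j k : ℤ, G (j, k) ≠ 0 → 0 ≤ j ∧ 0 ≤ k ∧ 2 * j + k ≤ n) :
    ∑ᶠ p, G p = ∑ j ∈ range (n / 2 + 1), ∑ k ∈ range (n - 2 * j + 1), G (j, k) := by
  let cast : (Σ _ : ℕ, ℕ) ↪ ℤ × ℤ :=
    ⟨fun p => (p.1, p.2), fun p q h => by
      obtain ⟨h1, h2⟩ := Prod.mk.inj h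
      exact Sigma.ext (by exact_mod_cast h1) (heq_of_eq (by exact_mod_cast h2))⟩
  rw [finsum_eq_sum_of_support_subset G (s := ((range (n / 2 + 1)).sigma fun j =>
    range (n - 2 * j + 1)).map cast), sum_map, sum_sigma]
  · rfl
  rintro ⟨j, k⟩ hjk
  obtain ⟨hj, hk, hn⟩ := hG j k hjk
  lift j to ℕ using hj
  lift k to ℕ using hk
  simp only [coe_map, Set.mem_image, mem_coe, mem_sigma, mem_range]
  exact ⟨⟨j, k⟩, ⟨show j < n / 2 + 1 by omega, show k < n - 2 * j + 1 by omega⟩, rfl⟩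

theorem finsum_smul_comp_add {M : Type*} [AddCommGroup M] (c : ℤ × ℤ → ℤ) (F : ℤ × ℤ → M)
    (e : ℤ × ℤ) : ∑ᶠ p, c p • F (p + e) = ∑ᶠ p, c (p - e) • F p := by
  simpa using finsum_comp_equiv (Equiv.addRight e) (f := fun p => c (p - e) • F p)

section CanonicalCommutation

variable {S R : Type*} [CommRing S] [Ring R] [Algebra S R] (a b : S) {D Q : R}

theorem mul_pow_eq_of_mul_eq (hDQ : D * Q = Q * D + 1) (k : ℕ) :
    D * Q ^ k = Q ^ k * D + k • Q ^ (k - 1) := by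
  induction k with
  | zero => simp
  | succ k ih =>
    calc D * Q ^ (k + 1) = (Q ^ k * D + k • Q ^ (k - 1)) * Q := by rw [pow_succ, ← mul_assoc, ih]
      _ = Q ^ (k + 1) * D + (k + 1) • Q ^ k := by
        rcases k with _ | k
        · simp [hDQ]
        · rw [add_mul, mul_assoc, hDQ, smul_mul_assoc, ← pow_succ, mul_add, ← mul_assoc,
            ← pow_succ, Nat.add_sub_cancel, mul_one]
          module

/- The `toNat`s truncate only outside `0 ≤ j, 0 ≤ k, 2j + k ≤ n`, where `Acoef n j k = 0`. -/
variable (D Q) in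
def normalMonomial (n : ℕ) (p : ℤ × ℤ) : R :=
  (a ^ (n - p.1 - p.2).toNat * b ^ (p.1 + p.2).toNat) •
    (Q ^ p.2.toNat * D ^ (n - 2 * p.1 - p.2).toNat)

theorem normalMonomial_of_eq {n j k m : ℕ} (h : n = 2 * j + k + m) :
    normalMonomial a b D Q n (j, k) = (a ^ (j + m) * b ^ (j + k)) • (Q ^ k * D ^ m) := by
  simp only [normalMonomial]
  congr <;> omega

theorem smul_add_smul_mul_normalMonomial (hDQ : D * Q = Q * D + 1) (j k m : ℕ) :
    (a • D + b • Q) * normalMonomial a b D Q (2 * j + k + m) (j, k) =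
      normalMonomial a b D Q (2 * j + k + m + 1) (j, k) +
        normalMonomial a b D Q (2 * j + k + m + 1) (j, k + 1) +
        k • normalMonomial a b D Q (2 * j + k + m + 1) (j + 1, k - 1) := by
  have hD : D * (Q ^ k * D ^ m) = Q ^ k * D ^ (m + 1) + k • (Q ^ (k - 1) * D ^ m) := by
    rw [← mul_assoc, mul_pow_eq_of_mul_eq hDQ, add_mul, mul_assoc, ← pow_succ', smul_mul_assoc]
  have hQ : Q * (Q ^ k * D ^ m) = Q ^ (k + 1) * D ^ m := by rw [← mul_assoc, ← pow_succ']
  rw [← Nat.cast_add_one k, normalMonomial_of_eq a b rfl,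
    normalMonomial_of_eq a b (m := m + 1) (by omega),
    normalMonomial_of_eq a b (k := k + 1) (m := m) (by omega), mul_smul_comm, add_mul,
    smul_mul_assoc, smul_mul_assoc, hD, hQ]
  rcases k with _ | k
  · simp only [CharP.cast_eq_zero, zero_smul, add_zero]
    module
  · rw [show ((k + 1 : ℕ) : ℤ) - 1 = (k : ℕ) by push_cast; ring, ← Nat.cast_add_one j,
      normalMonomial_of_eq a b (m := m) (by omega), Nat.add_sub_cancel]
    module

theorem smul_add_smul_pow_eq_finsum (hDQ : D * Q = Q * D + 1) (n : ℕ) :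
    (a • D + b • Q) ^ n = ∑ᶠ p : ℤ × ℤ, Acoef n p.1 p.2 • normalMonomial a b D Q n p := by
  induction n with
  | zero =>
    rw [finsum_eq_single _ (0, 0) fun p hp => by
      rw [Acoef_eq_zero (by grind), zero_smul]]
    simp [Acoef, normalMonomial]
  | succ n ih =>
    set M := normalMonomial a b D Q (n + 1)
    set c : ℤ × ℤ → ℤ := fun p => Acoef n p.1 p.2
    have hc : c.HasFiniteSupport := hasFiniteSupport_Acoef n
    have step (p : ℤ × ℤ) : (a • D + b • Q) * (c p • normalMonomial a b D Q n p) =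
        c p • M p + c p • M (p + (0, 1)) + (p.2 * c p) • M (p + (1, -1)) := by
      by_cases hp : c p = 0
      · simp [hp]
      obtain ⟨hj, hk, hn⟩ := not_imp_comm.mp Acoef_eq_zero hp
      obtain ⟨j, k⟩ := p
      lift j to ℕ using hj
      lift k to ℕ using hk
      obtain ⟨m, rfl⟩ : ∃ m, n = 2 * j + k + m := ⟨n - 2 * j - k, by omega⟩
      rw [mul_smul_comm, smul_add_smul_mul_normalMonomial a b hDQ, mul_smul]
      simp only [Prod.mk_add_mk, add_zero, smul_add, natCast_zsmul]
      rw [smul_comm (c _) k, ← sub_eq_add_neg]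
    have hshift (e : ℤ × ℤ) : (fun p => c (p - e)).HasFiniteSupport :=
      hc.fun_comp_of_injective sub_left_injective
    have h0 := hc.fun_smul_left M
    have h1 := (hshift (0, 1)).fun_smul_left M
    have h2 := ((hshift (1, -1)).fun_mul_right fun p => (p - (1, -1)).2).fun_smul_left M
    rw [pow_succ', ih, mul_finsum' _ _ (hc.fun_smul_left _), finsum_congr step,
      finsum_add_distrib (by fun_prop) (by fun_prop),
      finsum_add_distrib (by fun_prop) (by fun_prop),
      finsum_smul_comp_add, finsum_smul_comp_add, ← finsum_add_distrib h0 h1,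
      ← finsum_add_distrib (h0.fun_add h1) h2]
    refine finsum_congr fun p => ?_
    rw [← add_smul, ← add_smul, Acoef_succ]
    simp only [c, Prod.fst_sub, Prod.snd_sub, sub_zero, sub_neg_eq_add]

theorem smul_add_smul_pow_eq_sum (hDQ : D * Q = Q * D + 1) (n : ℕ) :
    (a • D + b • Q) ^ n = ∑ j ∈ range (n / 2 + 1), ∑ k ∈ range (n - 2 * j + 1),
      ((Acoef n j k : S) * a ^ (n - j - k) * b ^ (j + k)) • (Q ^ k * D ^ (n - 2 * j - k)) := by
  rw [smul_add_smul_pow_eq_finsum a b hDQ n, finsum_eq_sum_range_sum_range]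
  · refine sum_congr rfl fun j hj => sum_congr rfl fun k hk => ?_
    have hjk : 2 * j + k ≤ n := by
      have := mem_range.mp hj; have := mem_range.mp hk; omega
    rw [normalMonomial_of_eq a b (m := n - 2 * j - k) (by omega), ← Int.cast_smul_eq_zsmul S,
      smul_smul, ← mul_assoc, show j + (n - 2 * j - k) = n - j - k by omega]
  · exact fun j k h => not_imp_comm.mp Acoef_eq_zero (left_ne_zero_of_smul h)

end CanonicalCommutation

open scoped ContDiff

def smoothFunctions : Submodule ℂ (ℝ → ℂ) where
  carrier := {g | ContDiff ℝ ∞ g}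
  add_mem' {_ _} (hf : ContDiff ℝ ∞ _) (hg : ContDiff ℝ ∞ _) := hf.add hg
  zero_mem' := (contDiff_const : ContDiff ℝ ∞ fun _ : ℝ => (0 : ℂ))
  smul_mem' c _ (hg : ContDiff ℝ ∞ _) := hg.const_smul c

namespace smoothFunctions

theorem mem_iff {g : ℝ → ℂ} : g ∈ smoothFunctions ↔ ContDiff ℝ ∞ g := Iff.rfl

theorem contDiff_coe (g : smoothFunctions) : ContDiff ℝ ∞ (g : ℝ → ℂ) := g.2

theorem differentiable_coe (g : smoothFunctions) : Differentiable ℝ (g : ℝ → ℂ) :=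
  (contDiff_infty_iff_deriv.mp (contDiff_coe g)).1

def deriv : smoothFunctions →ₗ[ℂ] smoothFunctions where
  toFun g := ⟨_root_.deriv g, (contDiff_infty_iff_deriv.mp (contDiff_coe g)).2⟩
  map_add' g h := Subtype.ext <| funext fun t =>
    deriv_add (differentiable_coe g t) (differentiable_coe h t)
  map_smul' c g := Subtype.ext <| funext fun t => deriv_const_smul c (differentiable_coe g t)

def mulCoord : smoothFunctions →ₗ[ℂ] smoothFunctions where
  toFun g := ⟨fun t => t * (g : ℝ → ℂ) t, Complex.ofRealCLM.contDiff.mul (contDiff_coe g)⟩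
  map_add' _ _ := Subtype.ext <| funext fun _ => mul_add _ _ _
  map_smul' _ _ := Subtype.ext <| funext fun _ => mul_left_comm _ _ _

theorem deriv_mul_mulCoord : deriv * mulCoord = mulCoord * deriv + 1 := by
  refine LinearMap.ext fun g => Subtype.ext <| funext fun t => ?_
  simp only [Module.End.mul_apply, LinearMap.add_apply, Module.End.one_apply, Submodule.coe_add,
    Pi.add_apply, deriv, mulCoord, LinearMap.coe_mk, AddHom.coe_mk]
  refine ((hasDerivAt_id t).ofReal_comp.fun_mul (differentiable_coe g t).hasDerivAt).deriv.trans
    ?_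
  simp only [id, Complex.ofReal_one, one_mul, add_comm]

theorem mulCoord_pow_apply (k : ℕ) (g : smoothFunctions) (t : ℝ) :
    ((mulCoord ^ k) g : ℝ → ℂ) t = (t : ℂ) ^ k * (g : ℝ → ℂ) t := by
  induction k generalizing g with
  | zero => simp
  | succ k ih =>
    rw [pow_succ, Module.End.mul_apply, ih, pow_succ]
    simp only [mulCoord, LinearMap.coe_mk, AddHom.coe_mk]
    ring

end smoothFunctions

theorem iterate_pq_eq (f : ℝ → ℝ → ℝ → ℂ) (x y : ℝ) (hf : f x y ∈ smoothFunctions) (m : ℕ) :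
    pq^[m] f x y = ((smoothFunctions.deriv ^ m) ⟨f x y, hf⟩ : ℝ → ℂ) := by
  induction m with
  | zero => rfl
  | succ m ih =>
    rw [Function.iterate_succ_apply', pow_succ', Module.End.mul_apply]
    show pq (pq^[m] f) x y = deriv ((smoothFunctions.deriv ^ m) ⟨f x y, hf⟩ : ℝ → ℂ)
    rw [← ih]
    rfl

theorem iterate_Xs_eq (f : ℝ → ℝ → ℝ → ℂ) (x y : ℝ) (hf : f x y ∈ smoothFunctions) (n : ℕ) :
    Xs^[n] f x y =
      ((((y : ℂ) • smoothFunctions.deriv + (Complex.I * x) • smoothFunctions.mulCoord) ^ n)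
        ⟨f x y, hf⟩ : ℝ → ℂ) := by
  induction n with
  | zero => rfl
  | succ n ih =>
    rw [Function.iterate_succ_apply', pow_succ', Module.End.mul_apply]
    generalize (_ ^ n : Module.End ℂ smoothFunctions) ⟨f x y, hf⟩ = g at ih
    funext t
    simp only [Xs, pq, ih, LinearMap.add_apply, LinearMap.smul_apply, Submodule.coe_add,
      Submodule.coe_smul, Pi.add_apply, Pi.smul_apply, smul_eq_mul, smoothFunctions.deriv,
      smoothFunctions.mulCoord, LinearMap.coe_mk, AddHom.coe_mk]
    ring

theorem Xs_pow_formula (n : ℕ) (f : ℝ → ℝ → ℝ → ℂ) (hf : Smooth3 f) (x y q : ℝ) :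
    Xs^[n] f x y q =
      ∑ j ∈ Finset.range (n / 2 + 1), ∑ k ∈ Finset.range (n - 2 * j + 1),
        (Acoef n j k : ℂ) * (y : ℂ) ^ (n - j - k) * (Complex.I * x) ^ (j + k) *
          (q : ℂ) ^ k * pq^[n - 2 * j - k] f x y q := by
  have hslice : f x y ∈ smoothFunctions := smoothFunctions.mem_iff.mpr <|
    (hf.of_le le_top).comp (contDiff_const.prodMk (contDiff_const.prodMk contDiff_id))
  rw [iterate_Xs_eq f x y hslice,
    smul_add_smul_pow_eq_sum (S := ℂ) (R := Module.End ℂ smoothFunctions) _ _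
      smoothFunctions.deriv_mul_mulCoord]
  simp only [LinearMap.coe_sum, Finset.sum_apply, Submodule.coe_sum]
  refine sum_congr rfl fun j _ => sum_congr rfl fun k _ => ?_
  rw [LinearMap.smul_apply, Module.End.mul_apply, Submodule.coe_smul, Pi.smul_apply,
    smoothFunctions.mulCoord_pow_apply, iterate_pq_eq f x y hslice, smul_eq_mul]
  ring
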